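/- Let u_i, u_j, u_k, u_l ∈ ℝ³ be points with distinct projections p_i, p_j, p_k, p_l ∈ ℝ² (forgetting the z-coordinate), such that the triangles (p_i, p_j, p_k) and (p_l, p_j, p_i) are nondegenerate, and suppose the four points u_i, u_j, u_k, u_l have integer coordinates bounded so that all pairwise differences have norm at most L with L ≥ 1. Then the canonical stress value ω_{ij} = [u_i u_j u_k u_l] / ([p_i p_j p_k][p_l p_j p_i]) satisfies: if [u_i u_j u_k u_l] ≠ 0 then 1/L⁴ ≤ |ω_{ij}| ≤ L³, where [u_i u_j u_k u_l] is the 4×4 determinant with columns (x, y, z, 1)ᵀ and [pqr] the 3×3 determinant with columns (x, y, 1)ᵀ. -/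

import Mathlib

open Finset

/-- `[p q r]`: twice the signed area of the triangle `p q r` in `ℝ²`. -/
def br2 (p q r : Fin 2 → ℝ) : ℝ :=
  (q 0 - p 0) * (r 1 - p 1) - (q 1 - p 1) * (r 0 - p 0)

/-- `[a b c d]`: the 4×4 determinant with columns `(x, y, z, 1)ᵀ`. -/
def det4 (a b c d : Fin 3 → ℝ) : ℝ :=
  Matrix.det !![a 0, b 0, c 0, d 0; a 1, b 1, c 1, d 1;
                a 2, b 2, c 2, d 2; 1, 1, 1, 1]

/-- The Euclidean norm on `Fin m → ℝ`. -/
noncomputable def normE {m : ℕ} (x : Fin m → ℝ) : ℝ := Real.sqrt (∑ k, x k ^ 2)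

/-!
The two triangle areas and the tetrahedron volume are integers, so when nonzero they have
absolute value at least `1`. Writing the volume as the triple product of three edge vectors,
Cauchy–Schwarz together with Lagrange's identity `|v × w|² = |v|²|w|² - (v ⬝ w)²` gives
Hadamard's bound `L³`; the same argument in the plane bounds each area by `L²`, since
projecting to the `xy`-plane does not increase lengths. Hence `1 / L⁴ ≤ |ω| ≤ L³`.
-/

open Matrix

lemma dotProduct_self_nonneg {m : ℕ} (x : Fin m → ℝ) : 0 ≤ x ⬝ᵥ x :=
  sum_nonneg fun i _ => mul_self_nonneg (x i)

lemma sq_dotProduct_le {m : ℕ} (x y : Fin m → ℝ) :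
    (x ⬝ᵥ y) ^ 2 ≤ (x ⬝ᵥ x) * (y ⬝ᵥ y) := by
  simpa only [dotProduct, sq] using sum_mul_sq_le_sq_mul_sq univ x y

lemma normE_nonneg {m : ℕ} (x : Fin m → ℝ) : 0 ≤ normE x := Real.sqrt_nonneg _

lemma normE_eq_sqrt_dotProduct {m : ℕ} (x : Fin m → ℝ) : normE x = √(x ⬝ᵥ x) := by
  simp only [normE, dotProduct, sq]

lemma normE_castSucc_le {m : ℕ} (x : Fin (m + 1) → ℝ) :
    normE (fun k => x k.castSucc) ≤ normE x := by
  unfold normE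
  gcongr
  rw [Fin.sum_univ_castSucc]
  exact le_add_of_nonneg_right (sq_nonneg _)

lemma normE_sub_castSucc_le {m : ℕ} (x y : Fin (m + 1) → ℝ) :
    normE ((fun k => x k.castSucc) - fun k => y k.castSucc) ≤ normE (x - y) :=
  normE_castSucc_le (x - y)

lemma sq_det_fin_three_le (u v w : Fin 3 → ℝ) :
    det (of ![u, v, w]) ^ 2 ≤ (u ⬝ᵥ u) * (v ⬝ᵥ v) * (w ⬝ᵥ w) := by
  calc det (of ![u, v, w]) ^ 2 = (u ⬝ᵥ v ⨯₃ w) ^ 2 := by rw [triple_product_eq_det]; rfl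
    _ ≤ (u ⬝ᵥ u) * (v ⨯₃ w ⬝ᵥ v ⨯₃ w) := sq_dotProduct_le _ _
    _ = (u ⬝ᵥ u) * ((v ⬝ᵥ v) * (w ⬝ᵥ w) - (v ⬝ᵥ w) ^ 2) := by
      rw [cross_dot_cross, dotProduct_comm w v]; ring
    _ ≤ (u ⬝ᵥ u) * (v ⬝ᵥ v) * (w ⬝ᵥ w) := by
      rw [mul_assoc]
      gcongr
      · exact dotProduct_self_nonneg u
      · exact sub_le_self _ (sq_nonneg _)

lemma abs_det_fin_three_le (u v w : Fin 3 → ℝ) :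
    |det (of ![u, v, w])| ≤ normE u * normE v * normE w := by
  rw [normE_eq_sqrt_dotProduct, normE_eq_sqrt_dotProduct, normE_eq_sqrt_dotProduct,
    ← Real.sqrt_mul (dotProduct_self_nonneg u),
    ← Real.sqrt_mul (mul_nonneg (dotProduct_self_nonneg u) (dotProduct_self_nonneg v))]
  exact Real.abs_le_sqrt (sq_det_fin_three_le u v w)

lemma det4_eq_neg_det_sub (a b c d : Fin 3 → ℝ) :
    det4 a b c d = -det (of ![b - a, c - a, d - a]) := by
  rw [det4, det_succ_row_zero, Fin.sum_univ_four, det_fin_three, det_fin_three, det_fin_three,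
    det_fin_three, det_fin_three]
  simp only [of_apply, submatrix_apply, Fin.succAbove, cons_val', Matrix.cons_val, cons_val_fin_one,
    Fin.reduceSucc, Fin.reduceCastSucc, Fin.reduceLT, ↓reduceIte, Fin.coe_ofNat_eq_mod,
    Pi.sub_apply]
  ring

lemma abs_det4_le (a b c d : Fin 3 → ℝ) :
    |det4 a b c d| ≤ normE (b - a) * normE (c - a) * normE (d - a) := by
  rw [det4_eq_neg_det_sub, abs_neg]
  exact abs_det_fin_three_le _ _ _

lemma abs_det4_le_pow_three {a b c d : Fin 3 → ℝ} {L : ℝ} (hb : normE (b - a) ≤ L)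
    (hc : normE (c - a) ≤ L) (hd : normE (d - a) ≤ L) : |det4 a b c d| ≤ L ^ 3 :=
  calc |det4 a b c d| ≤ normE (b - a) * normE (c - a) * normE (d - a) := abs_det4_le a b c d
    _ ≤ L * L * L := by
      have hL : 0 ≤ L := (normE_nonneg _).trans hb
      exact mul_le_mul (mul_le_mul hb hc (normE_nonneg _) hL) hd (normE_nonneg _) (mul_nonneg hL hL)
    _ = L ^ 3 := by ring

lemma sq_br2_le (p q r : Fin 2 → ℝ) :
    br2 p q r ^ 2 ≤ ((q - p) ⬝ᵥ (q - p)) * ((r - p) ⬝ᵥ (r - p)) := by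
  have lagrange : br2 p q r ^ 2 + ((q - p) ⬝ᵥ (r - p)) ^ 2
      = ((q - p) ⬝ᵥ (q - p)) * ((r - p) ⬝ᵥ (r - p)) := by
    simp only [br2, dotProduct, Fin.sum_univ_two, Pi.sub_apply]
    ring
  linarith [sq_nonneg ((q - p) ⬝ᵥ (r - p))]

lemma abs_br2_le (p q r : Fin 2 → ℝ) : |br2 p q r| ≤ normE (q - p) * normE (r - p) := by
  rw [normE_eq_sqrt_dotProduct, normE_eq_sqrt_dotProduct,
    ← Real.sqrt_mul (dotProduct_self_nonneg _)]
  exact Real.abs_le_sqrt (sq_br2_le p q r)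

lemma abs_br2_le_sq {p q r : Fin 2 → ℝ} {L : ℝ} (hq : normE (q - p) ≤ L)
    (hr : normE (r - p) ≤ L) : |br2 p q r| ≤ L ^ 2 :=
  calc |br2 p q r| ≤ normE (q - p) * normE (r - p) := abs_br2_le p q r
    _ ≤ L * L := mul_le_mul hq hr (normE_nonneg _) ((normE_nonneg _).trans hq)
    _ = L ^ 2 := by ring

lemma one_le_abs_of_eq_intCast {x : ℝ} (hx : ∃ n : ℤ, x = n) (h0 : x ≠ 0) : 1 ≤ |x| := by
  obtain ⟨n, rfl⟩ := hx
  exact_mod_cast Int.one_le_abs (by exact_mod_cast h0)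

lemma exists_br2_intCast_eq (p q r : Fin 2 → ℤ) :
    ∃ n : ℤ, br2 (fun k => (p k : ℝ)) (fun k => (q k : ℝ)) (fun k => (r k : ℝ)) = n :=
  ⟨(q 0 - p 0) * (r 1 - p 1) - (q 1 - p 1) * (r 0 - p 0), by simp [br2]⟩

lemma exists_det4_intCast_eq (a b c d : Fin 3 → ℤ) :
    ∃ n : ℤ, det4 (fun k => (a k : ℝ)) (fun k => (b k : ℝ)) (fun k => (c k : ℝ))
      (fun k => (d k : ℝ)) = n := by
  refine ⟨det !![a 0, b 0, c 0, d 0; a 1, b 1, c 1, d 1; a 2, b 2, c 2, d 2; 1, 1, 1, 1], ?_⟩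
  rw [Int.cast_det, det4]
  congr 1
  ext i j
  fin_cases i <;> fin_cases j <;> simp

lemma div_mul_mem_Icc {L d a b : ℝ} (hd : 1 ≤ d) (hdL : d ≤ L ^ 3) (ha : 1 ≤ a)
    (haL : a ≤ L ^ 2) (hb : 1 ≤ b) (hbL : b ≤ L ^ 2) :
    d / (a * b) ∈ Set.Icc (1 / L ^ 4) (L ^ 3) := by
  have hab : 1 ≤ a * b := one_le_mul_of_one_le_of_one_le ha hb
  have habL : a * b ≤ L ^ 4 :=
    calc a * b ≤ L ^ 2 * L ^ 2 := mul_le_mul haL hbL (by linarith) (by linarith)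
      _ = L ^ 4 := by ring
  constructor
  · calc 1 / L ^ 4 ≤ 1 / (a * b) := one_div_le_one_div_of_le (by linarith) habL
      _ ≤ d / (a * b) := div_le_div_of_nonneg_right hd (by linarith)
  · calc d / (a * b) ≤ d := div_le_self (by linarith) hab
      _ ≤ L ^ 3 := hdL

theorem stmt18_general
    (ui uj uk ul : Fin 3 → ℤ)
    (pi pj pk pl : Fin 2 → ℝ)
    (hpi : pi = fun k : Fin 2 => (ui k.castSucc : ℝ))
    (hpj : pj = fun k : Fin 2 => (uj k.castSucc : ℝ))
    (hpk : pk = fun k : Fin 2 => (uk k.castSucc : ℝ))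
    (hpl : pl = fun k : Fin 2 => (ul k.castSucc : ℝ))
    (hnd1 : br2 pi pj pk ≠ 0) (hnd2 : br2 pl pj pi ≠ 0)
    (L : ℝ)
    (hdiff : ∀ v w : Fin 3 → ℤ,
      v ∈ ({ui, uj, uk, ul} : Set (Fin 3 → ℤ)) →
      w ∈ ({ui, uj, uk, ul} : Set (Fin 3 → ℤ)) →
      normE (fun k => (v k : ℝ) - (w k : ℝ)) ≤ L)
    (ω : ℝ)
    (hω : ω = det4 (fun k => (ui k : ℝ)) (fun k => (uj k : ℝ))
      (fun k => (uk k : ℝ)) (fun k => (ul k : ℝ)) / (br2 pi pj pk * br2 pl pj pi))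
    (hnz : det4 (fun k => (ui k : ℝ)) (fun k => (uj k : ℝ))
      (fun k => (uk k : ℝ)) (fun k => (ul k : ℝ)) ≠ 0) :
    1 / L ^ 4 ≤ |ω| ∧ |ω| ≤ L ^ 3 := by
  subst hpi hpj hpk hpl hω
  have dist_le (v w : Fin 3 → ℤ)
      (hv : v ∈ ({ui, uj, uk, ul} : Set (Fin 3 → ℤ)) := by simp)
      (hw : w ∈ ({ui, uj, uk, ul} : Set (Fin 3 → ℤ)) := by simp) :
      normE ((fun k => (v k : ℝ)) - fun k => (w k : ℝ)) ≤ L :=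
    hdiff v w hv hw
  have proj_dist_le (v w : Fin 3 → ℤ)
      (hv : v ∈ ({ui, uj, uk, ul} : Set (Fin 3 → ℤ)) := by simp)
      (hw : w ∈ ({ui, uj, uk, ul} : Set (Fin 3 → ℤ)) := by simp) :
      normE ((fun k : Fin 2 => (v k.castSucc : ℝ)) - fun k => (w k.castSucc : ℝ)) ≤ L :=
    (normE_sub_castSucc_le _ _).trans (dist_le v w hv hw)
  have vol_le := abs_det4_le_pow_three (dist_le uj ui) (dist_le uk ui) (dist_le ul ui)
  have area_ijk_le := abs_br2_le_sq (proj_dist_le uj ui) (proj_dist_le uk ui)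
  have area_lji_le := abs_br2_le_sq (proj_dist_le uj ul) (proj_dist_le ui ul)
  rw [abs_div, abs_mul]
  exact div_mul_mem_Icc
    (one_le_abs_of_eq_intCast (exists_det4_intCast_eq ui uj uk ul) hnz) vol_le
    (one_le_abs_of_eq_intCast (exists_br2_intCast_eq _ _ _) hnd1) area_ijk_le
    (one_le_abs_of_eq_intCast (exists_br2_intCast_eq _ _ _) hnd2) area_lji_le

/-- bounds on the canonical Maxwell–Cremona stress of an edge.
Let `u_i, u_j, u_k, u_l ∈ ℤ³` have distinct planar projections
`p_i, p_j, p_k, p_l` (forgetting the `z`-coordinate), with both triangles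
`(p_i, p_j, p_k)` and `(p_l, p_j, p_i)` nondegenerate, and all pairwise
differences of the `u`'s of norm at most `L ≥ 1`.  If
`[u_i u_j u_k u_l] ≠ 0` then the canonical stress
`ω = [u_i u_j u_k u_l]/([p_i p_j p_k][p_l p_j p_i])` satisfies
`1/L⁴ ≤ |ω| ≤ L³`. -/
theorem stmt18
    (ui uj uk ul : Fin 3 → ℤ)
    (pi pj pk pl : Fin 2 → ℝ)
    (hpi : pi = fun k : Fin 2 => (ui k.castSucc : ℝ))
    (hpj : pj = fun k : Fin 2 => (uj k.castSucc : ℝ))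
    (hpk : pk = fun k : Fin 2 => (uk k.castSucc : ℝ))
    (hpl : pl = fun k : Fin 2 => (ul k.castSucc : ℝ))
    (hdist : pi ≠ pj ∧ pi ≠ pk ∧ pi ≠ pl ∧ pj ≠ pk ∧ pj ≠ pl ∧ pk ≠ pl)
    (hnd1 : br2 pi pj pk ≠ 0) (hnd2 : br2 pl pj pi ≠ 0)
    (L : ℝ) (hL : 1 ≤ L)
    (hdiff : ∀ v w : Fin 3 → ℤ,
      v ∈ ({ui, uj, uk, ul} : Set (Fin 3 → ℤ)) →
      w ∈ ({ui, uj, uk, ul} : Set (Fin 3 → ℤ)) →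
      normE (fun k => (v k : ℝ) - (w k : ℝ)) ≤ L)
    (ω : ℝ)
    (hω : ω = det4 (fun k => (ui k : ℝ)) (fun k => (uj k : ℝ))
      (fun k => (uk k : ℝ)) (fun k => (ul k : ℝ)) / (br2 pi pj pk * br2 pl pj pi))
    (hnz : det4 (fun k => (ui k : ℝ)) (fun k => (uj k : ℝ))
      (fun k => (uk k : ℝ)) (fun k => (ul k : ℝ)) ≠ 0) :
    1 / L ^ 4 ≤ |ω| ∧ |ω| ≤ L ^ 3 :=
  stmt18_general ui uj uk ul pi pj pk pl hpi hpj hpk hpl hnd1 hnd2 L hdiff ω hω hnz
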